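/- Let x, y be surreal numbers such that the maximal ordinal α with α ⊑ y is a limit ordinal (and y > 0). Then ω^{x ∔ y} = ω^x ∔ ω^{τ_x ∔ y}, where τ_x is the ordinal of +1 signs in x. -/

import Mathlib

open Ordinal

attribute [local instance] Classical.propDecidable

/-- A surreal number presented as a sign sequence: a map from an ordinal (its
length) to `{-1, +1}`, extended by `0` beyond its length. -/
structure SSurreal : Type 1 where
  length : Ordinal.{0}
  sign : Ordinal → ℤ
  sign_mem : ∀ α, α < length → sign α = 1 ∨ sign α = -1
  sign_zero : ∀ α, ¬ α < length → sign α = 0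

namespace SSurreal

/-- Simplicity: `x ⊑ y`, i.e. `x` is an initial segment of `y`. -/
def sle (x y : SSurreal) : Prop := ∀ α, α < x.length → x.sign α = y.sign α

/-- Strict simplicity `x ⊏ y`. -/
def slt (x y : SSurreal) : Prop := sle x y ∧ x ≠ y

/-- The (lexicographic, Conway) order on sign sequences. -/
def lt (x y : SSurreal) : Prop :=
  ∃ α, (∀ β, β < α → x.sign β = y.sign β) ∧ x.sign α < y.sign α

/-- The empty sign sequence, i.e. the surreal number `0`. -/
noncomputable def zero : SSurreal :=
  ⟨0, fun _ => 0, fun α h => absurd h (not_lt_of_ge (zero_le (a := α))), fun _ _ => rfl⟩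

/-- The ordinal `o` viewed as the constant `+1` sign sequence of length `o`. -/
noncomputable def ofOrdinal (o : Ordinal) : SSurreal :=
  ⟨o, fun α => if α < o then 1 else 0, fun α h => Or.inl (if_pos h), fun α h => if_neg h⟩

/-- The surreal number `1`. -/
noncomputable def one : SSurreal := ofOrdinal 1

/-- The surreal number `-1`. -/
noncomputable def negOne : SSurreal :=
  ⟨1, fun α => if α < 1 then -1 else 0, fun α h => Or.inr (if_pos h), fun α h => if_neg h⟩

/-- Negation: flip every sign. -/
noncomputable def neg (x : SSurreal) : SSurreal :=
  ⟨x.length, fun α => - x.sign α,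
    fun α h => by rcases x.sign_mem α h with h' | h' <;> simp [h'],
    fun α h => by simp [x.sign_zero α h]⟩

/-- Concatenation `x ∔ y` of sign sequences. -/
noncomputable def concat (x y : SSurreal) : SSurreal where
  length := x.length + y.length
  sign α := if α < x.length then x.sign α else y.sign (α - x.length)
  sign_mem := by
    intro α h
    try dsimp only
    by_cases hx : α < x.length
    · rw [if_pos hx]; exact x.sign_mem α hx
    · rw [if_neg hx]
      refine y.sign_mem _ ?_
      have hle : x.length ≤ α := le_of_not_gt hx
      have := Ordinal.sub_lt_of_le hle (c := y.length)
      exact this.mpr h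
  sign_zero := by
    intro α h
    try dsimp only
    have hx : ¬ α < x.length := fun hx =>
      h (hx.trans_le (le_add_right (le_refl _)))
    rw [if_neg hx]
    refine y.sign_zero _ ?_
    intro hy
    exact h ((Ordinal.sub_lt_of_le (le_of_not_gt hx)).mp hy)

/-- The concatenation product `x ⨰ y` of sign sequences. -/
noncomputable def mul (x y : SSurreal) : SSurreal where
  length := x.length * y.length
  sign γ := if γ < x.length * y.length then y.sign (γ / x.length) * x.sign (γ % x.length) else 0
  sign_mem := by
    intro γ h
    try dsimp only
    rw [if_pos h]
    have hx0 : x.length ≠ 0 := by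
      intro h0; rw [h0, zero_mul] at h; exact (not_lt_of_ge (zero_le (a := γ))) h
    have h1 : γ / x.length < y.length := by
      rwa [Ordinal.div_lt hx0]
    have h2 : γ % x.length < x.length := Ordinal.mod_lt γ hx0
    rcases y.sign_mem _ h1 with hy | hy <;> rcases x.sign_mem _ h2 with hx | hx <;>
      simp [hy, hx]
  sign_zero := fun γ h => if_neg h

/-- `s` is the supremum of `C` with respect to simplicity. -/
def IsSimpSup (C : Set SSurreal) (s : SSurreal) : Prop :=
  (∀ x ∈ C, sle x s) ∧ ∀ t, (∀ x ∈ C, sle x t) → sle s t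

/-- The supremum of a ⊏-chain of sign sequences (their union), when it
exists; junk value `zero` otherwise. -/
noncomputable def chainSup (C : Set SSurreal) : SSurreal :=
  if h : ∃ s, IsSimpSup C s then h.choose else zero

/-- Transfinite concatenation `[α, f] = ∔_{γ<α} f(γ)`. -/
noncomputable def concatSum (α : Ordinal) (f : Ordinal → SSurreal) : SSurreal :=
  Ordinal.limitRecOn α zero (fun β ih => concat ih (f β))
    (fun γ _ ih => chainSup (Set.range fun p : Set.Iio γ => ih p.1 p.2))

/-- Restriction of `z` to an initial segment of length (at most) `β`. -/
noncomputable def trunc (z : SSurreal) (β : Ordinal) : SSurreal where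
  length := min β z.length
  sign α := if α < min β z.length then z.sign α else 0
  sign_mem := fun α h => by
    try dsimp only
    rw [if_pos h]; exact z.sign_mem α (h.trans_le (min_le_right _ _))
  sign_zero := fun α h => if_neg h

/-- The number of `+1` signs occurring in `s` strictly below `γ`. -/
noncomputable def countPlus (s : Ordinal → ℤ) (γ : Ordinal) : Ordinal :=
  Ordinal.limitRecOn γ 0 (fun β ih => if s β = 1 then ih + 1 else ih)
    (fun γ' _ ih => ⨆ β : Set.Iio γ', ih β.1 β.2)

/-- `τ_u`: the ordinal number of `+1` signs in the sign sequence of `u`. -/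
noncomputable def tau (u : SSurreal) : Ordinal := countPlus u.sign u.length

end SSurreal

namespace SSurreal

/-- `σ · x`: `x` if the sign `σ` is `+1`, `−x` otherwise. -/
noncomputable def signScale (σ : ℤ) (x : SSurreal) : SSurreal :=
  if σ = 1 then x else neg x

/-- The right-hand side of Gonshor's sign sequence formula for the ω-map:
`1 ∔ ∔_{β<ℓ(z)} ( z[β] · ω^{τ_{z↾(β+1)} + 1} )`. -/
noncomputable def gonshorRHS (z : SSurreal) : SSurreal :=
  concat one
    (concatSum z.length fun β =>
      signScale (z.sign β)
        (ofOrdinal (Ordinal.omega0 ^ (tau (trunc z (β + 1)) + 1))))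

/-- `x` and `y` lie in the same archimedean class (with respect to Conway
multiplication `Cmul`): each is bounded by a positive integer multiple of the
other. -/
noncomputable def archEquiv (Cmul : SSurreal → SSurreal → SSurreal)
    (x y : SSurreal) : Prop :=
  ∃ n : ℕ, 0 < n ∧ lt y (Cmul (ofOrdinal n) x) ∧ lt x (Cmul (ofOrdinal n) y)

end SSurreal

/-! Gonshor's formula writes `ω^z` as `1` followed by one block `±ω^{τ+1}` per sign of `z`, where
`τ` counts the `+1` signs of `z` up to and including that sign. So the blocks of `x ∔ y` are those
of `x` followed by those of `y` with every exponent raised by `τ_x`. If `y` begins with the limit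
ordinal `α`, the first `α` blocks of `y` are the ordinals `ω^{τ_x+β+2}`, `β < α`, whose
concatenation is the ordinal `ω^{τ_x+α}`. On the right-hand side, `τ_x ∔ y` begins with the limit
ordinal `τ_x + α`, so `ω^{τ_x ∔ y}` begins with `1 + ω^{τ_x+α} = ω^{τ_x+α}`, and both sides
continue with the same shifted blocks of the rest of `y`. -/

namespace SSurreal

theorem ext_sign {x y : SSurreal} (hl : x.length = y.length)
    (hs : ∀ α < x.length, x.sign α = y.sign α) : x = y := by
  cases x with | mk lx sx _ zx => cases y with | mk ly sy _ zy =>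
  dsimp only at hl hs
  subst hl
  obtain rfl : sx = sy := funext fun α => by
    by_cases h : α < lx
    · exact hs α h
    · rw [zx α h, zy α h]
  rfl

@[simp] theorem zero_length : zero.length = 0 := rfl
@[simp] theorem ofOrdinal_length (o : Ordinal) : (ofOrdinal o).length = o := rfl
@[simp] theorem concat_length (x y : SSurreal) :
    (concat x y).length = x.length + y.length := rfl

theorem ofOrdinal_sign_of_lt {o α : Ordinal} (h : α < o) : (ofOrdinal o).sign α = 1 := if_pos h

theorem concat_sign_of_lt {x : SSurreal} (y : SSurreal) {α : Ordinal} (h : α < x.length) :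
    (concat x y).sign α = x.sign α := if_pos h

theorem concat_sign_of_le {x : SSurreal} (y : SSurreal) {α : Ordinal} (h : x.length ≤ α) :
    (concat x y).sign α = y.sign (α - x.length) := if_neg (not_lt.2 h)

theorem concat_sign_add (x y : SSurreal) (α : Ordinal) :
    (concat x y).sign (x.length + α) = y.sign α := by
  rw [concat_sign_of_le y le_self_add, Ordinal.add_sub_cancel]

theorem sle_refl (x : SSurreal) : sle x x := fun _ _ => rfl

theorem sle.length_le {x y : SSurreal} (h : sle x y) : x.length ≤ y.length := by
  by_contra! hc
  have h1 := h y.length hc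
  rw [y.sign_zero y.length (lt_irrefl _)] at h1
  rcases x.sign_mem y.length hc with h2 | h2 <;> omega

theorem sle.trans {x y z : SSurreal} (h₁ : sle x y) (h₂ : sle y z) : sle x z :=
  fun α hα => (h₁ α hα).trans (h₂ α (hα.trans_le h₁.length_le))

theorem sle_antisymm {x y : SSurreal} (h₁ : sle x y) (h₂ : sle y x) : x = y :=
  ext_sign (h₁.length_le.antisymm h₂.length_le) h₁

theorem sle_concat (x y : SSurreal) : sle x (concat x y) :=
  fun _ hα => (concat_sign_of_lt y hα).symm

theorem concat_sle_concat (x : SSurreal) {y z : SSurreal} (h : sle y z) :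
    sle (concat x y) (concat x z) := by
  intro α hα
  rcases lt_or_ge α x.length with h₁ | h₁
  · rw [concat_sign_of_lt _ h₁, concat_sign_of_lt _ h₁]
  · rw [concat_sign_of_le _ h₁, concat_sign_of_le _ h₁]
    exact h _ ((Ordinal.sub_lt_of_le h₁).2 hα)

theorem concat_zero (x : SSurreal) : concat x zero = x :=
  ext_sign (add_zero _) fun _ hα => concat_sign_of_lt _ (by simpa using hα)

theorem concat_assoc (x y z : SSurreal) :
    concat (concat x y) z = concat x (concat y z) := by
  refine ext_sign (add_assoc _ _ _) fun α hα => ?_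
  rcases lt_or_ge α x.length with h₁ | h₁
  · rw [concat_sign_of_lt _ (h₁.trans_le le_self_add), concat_sign_of_lt _ h₁,
      concat_sign_of_lt _ h₁]
  rw [concat_sign_of_le _ h₁]
  rcases lt_or_ge α (x.length + y.length) with h₂ | h₂
  · rw [concat_sign_of_lt _ h₂, concat_sign_of_le _ h₁,
      concat_sign_of_lt _ ((Ordinal.sub_lt_of_le h₁).2 h₂)]
  · rw [concat_sign_of_le _ h₂, concat_sign_of_le _ ((Ordinal.le_sub_of_le h₁).2 h₂),
      Ordinal.sub_sub]
    rfl

theorem concat_ofOrdinal (a b : Ordinal) :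
    concat (ofOrdinal a) (ofOrdinal b) = ofOrdinal (a + b) := by
  refine ext_sign rfl fun α hα => ?_
  rw [ofOrdinal_sign_of_lt (show α < a + b from hα)]
  rcases lt_or_ge α a with h | h
  · exact (concat_sign_of_lt (x := ofOrdinal a) _ h).trans (ofOrdinal_sign_of_lt h)
  · exact (concat_sign_of_le (x := ofOrdinal a) _ h).trans
      (ofOrdinal_sign_of_lt ((Ordinal.sub_lt_of_le h).2 hα))

theorem sle_ofOrdinal {a b : Ordinal} (h : a ≤ b) : sle (ofOrdinal a) (ofOrdinal b) :=
  fun _ hα => (ofOrdinal_sign_of_lt hα).trans (ofOrdinal_sign_of_lt (hα.trans_le h)).symm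

noncomputable def drop (t : SSurreal) (a : Ordinal) : SSurreal where
  length := t.length - a
  sign j := if j < t.length - a then t.sign (a + j) else 0
  sign_mem j hj := by
    rw [if_pos hj]
    exact t.sign_mem _ (Ordinal.lt_sub.1 hj)
  sign_zero _ hj := if_neg hj

theorem drop_sign_of_lt {t : SSurreal} {a j : Ordinal} (h : j < t.length - a) :
    (drop t a).sign j = t.sign (a + j) := if_pos h

theorem concat_drop {u t : SSurreal} (h : sle u t) : concat u (drop t u.length) = t := by
  refine ext_sign (Ordinal.add_sub_cancel_of_le h.length_le) fun α hα => ?_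
  rcases lt_or_ge α u.length with h₁ | h₁
  · rw [concat_sign_of_lt _ h₁, h α h₁]
  · rw [concat_sign_of_le _ h₁, drop_sign_of_lt ((Ordinal.sub_lt_of_le h₁).2 hα),
      Ordinal.add_sub_cancel_of_le h₁]

theorem sle_drop_of_concat_sle {x u t : SSurreal} (h : sle (concat x u) t) :
    sle u (drop t x.length) := by
  intro j hj
  have hxj : x.length + j < (concat x u).length := add_lt_add_right hj x.length
  rw [drop_sign_of_lt (Ordinal.lt_sub.2 (hxj.trans_le h.length_le)), ← h _ hxj,
    concat_sign_add]

theorem exists_isSimpSup (C : Set SSurreal) [Small.{0} C]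
    (hchain : ∀ x ∈ C, ∀ y ∈ C, sle x y ∨ sle y x) : ∃ s, IsSimpSup C s := by
  have hbdd : BddAbove (length '' C) := Ordinal.bddAbove_of_small
  set ℓ : Ordinal := sSup (length '' C)
  have hmem : ∀ {β}, β < ℓ → ∃ x ∈ C, β < x.length := by
    intro β hβ
    by_contra! hc
    exact hβ.not_ge (csSup_le' (by rintro _ ⟨x, hx, rfl⟩; exact hc x hx))
  have hagree : ∀ {β x y}, x ∈ C → y ∈ C → β < x.length → β < y.length →
      x.sign β = y.sign β := by
    intro β x y hx hy hbx hby
    rcases hchain x hx y hy with h | h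
    · exact h β hbx
    · exact (h β hby).symm
  refine ⟨⟨ℓ, fun β => if h : β < ℓ then (hmem h).choose.sign β else 0, fun β hβ => ?_,
    fun β hβ => dif_neg hβ⟩, fun x hx β hβ => ?_, fun t ht β hβ => ?_⟩
  · rw [dif_pos hβ]
    exact (hmem hβ).choose.sign_mem β (hmem hβ).choose_spec.2
  · have hβℓ : β < ℓ := hβ.trans_le (le_csSup hbdd ⟨x, hx, rfl⟩)
    dsimp only
    rw [dif_pos hβℓ]
    exact hagree hx (hmem hβℓ).choose_spec.1 hβ (hmem hβℓ).choose_spec.2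
  · dsimp only at hβ ⊢
    rw [dif_pos hβ]
    exact ht _ (hmem hβ).choose_spec.1 β (hmem hβ).choose_spec.2

theorem IsSimpSup.unique {C : Set SSurreal} {s s' : SSurreal}
    (h : IsSimpSup C s) (h' : IsSimpSup C s') : s = s' :=
  sle_antisymm (h.2 s' h'.1) (h'.2 s h.1)

theorem chainSup_eq {C : Set SSurreal} {s : SSurreal} (h : IsSimpSup C s) :
    chainSup C = s := by
  have hex : ∃ s, IsSimpSup C s := ⟨s, h⟩
  rw [chainSup, dif_pos hex]
  exact hex.choose_spec.unique h

theorem isSimpSup_chainSup {C : Set SSurreal} (h : ∃ s, IsSimpSup C s) :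
    IsSimpSup C (chainSup C) := by
  obtain ⟨s, hs⟩ := h
  rwa [chainSup_eq hs]

@[simp] theorem concatSum_zero (f : Ordinal.{0} → SSurreal) : concatSum 0 f = zero :=
  Ordinal.limitRecOn_zero _ _ _

theorem concatSum_add_one (α : Ordinal) (f : Ordinal.{0} → SSurreal) :
    concatSum (α + 1) f = concat (concatSum α f) (f α) :=
  Ordinal.limitRecOn_add_one _ _ _ _

theorem concatSum_of_isSuccLimit {α : Ordinal} (h : Order.IsSuccLimit α)
    (f : Ordinal.{0} → SSurreal) :
    concatSum α f = chainSup (Set.range fun p : Set.Iio α => concatSum p.1 f) :=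
  Ordinal.limitRecOn_limit _ _ _ _ h

theorem concatSum_congr {α : Ordinal} {f g : Ordinal.{0} → SSurreal}
    (h : ∀ β < α, f β = g β) : concatSum α f = concatSum α g := by
  induction α using Ordinal.limitRecOn with
  | zero => simp
  | add_one α ih =>
    rw [concatSum_add_one, concatSum_add_one, h α (lt_add_one α),
      ih fun β hβ => h β (hβ.trans (lt_add_one α))]
  | limit α hα ih =>
    simp only [concatSum_of_isSuccLimit hα]
    congr! 3 with p
    exact ih p.1 p.2 fun β hβ => h β (hβ.trans p.2)

theorem concatSum_sle_concatSum (f : Ordinal.{0} → SSurreal) {β γ : Ordinal} (h : β ≤ γ) :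
    sle (concatSum β f) (concatSum γ f) := by
  induction γ using Ordinal.limitRecOn generalizing β with
  | zero => rw [nonpos_iff_eq_zero.1 h]; exact sle_refl _
  | add_one γ ih =>
    rcases h.lt_or_eq with h | rfl
    · rw [concatSum_add_one]
      exact (ih (Order.lt_add_one_iff.1 h)).trans (sle_concat _ _)
    · exact sle_refl _
  | limit γ hγ ih =>
    rcases h.lt_or_eq with h | rfl
    · have hex : ∃ s, IsSimpSup (Set.range fun p : Set.Iio γ => concatSum p.1 f) s := by
        apply exists_isSimpSup
        rintro _ ⟨⟨p, hp⟩, rfl⟩ _ ⟨⟨q, hq⟩, rfl⟩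
        rcases le_total p q with hpq | hqp
        · exact Or.inl (ih q hq hpq)
        · exact Or.inr (ih p hp hqp)
      rw [concatSum_of_isSuccLimit hγ]
      exact (isSimpSup_chainSup hex).1 _ ⟨⟨β, h⟩, rfl⟩
    · exact sle_refl _

theorem isSimpSup_concatSum_range (f : Ordinal.{0} → SSurreal) (α : Ordinal) :
    ∃ s, IsSimpSup (Set.range fun p : Set.Iio α => concatSum p.1 f) s := by
  apply exists_isSimpSup
  rintro _ ⟨⟨p, -⟩, rfl⟩ _ ⟨⟨q, -⟩, rfl⟩
  exact (le_total p q).imp (concatSum_sle_concatSum f) (concatSum_sle_concatSum f)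

theorem concatSum_add (a b : Ordinal) (f : Ordinal.{0} → SSurreal) :
    concatSum (a + b) f = concat (concatSum a f) (concatSum b fun i => f (a + i)) := by
  induction b using Ordinal.limitRecOn with
  | zero => rw [add_zero, concatSum_zero, concat_zero]
  | add_one b ih => rw [← add_assoc, concatSum_add_one, concatSum_add_one, ih, concat_assoc]
  | limit b hb ih =>
    set A := concatSum a f
    set f' : Ordinal → SSurreal := fun i => f (a + i)
    have hs' := isSimpSup_chainSup (isSimpSup_concatSum_range f' b)
    rw [concatSum_of_isSuccLimit (Ordinal.isSuccLimit_add a hb), concatSum_of_isSuccLimit hb]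
    refine chainSup_eq ⟨?_, fun t ht => ?_⟩
    · rintro _ ⟨⟨p, hp⟩, rfl⟩
      rcases le_or_gt p a with hpa | hap
      · exact (concatSum_sle_concatSum f hpa).trans (sle_concat _ _)
      · have hpb : p - a < b := (Ordinal.sub_lt_of_le hap.le).2 hp
        dsimp only
        rw [← Ordinal.add_sub_cancel_of_le hap.le, ih _ hpb]
        exact concat_sle_concat _ (hs'.1 _ ⟨⟨p - a, hpb⟩, rfl⟩)
    · have hA : sle A t := ht _ ⟨⟨a, lt_add_of_pos_right a hb.bot_lt⟩, rfl⟩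
      have hdrop : sle (chainSup _) (drop t A.length) := hs'.2 _ <| by
        rintro _ ⟨⟨i, hi⟩, rfl⟩
        apply sle_drop_of_concat_sle
        rw [← ih i hi]
        exact ht _ ⟨⟨a + i, add_lt_add_right hi a⟩, rfl⟩
      simpa only [concat_drop hA] using concat_sle_concat A hdrop

section countPlus

variable (s : Ordinal.{0} → ℤ)

@[simp] theorem countPlus_zero : countPlus.{0, 0} s 0 = 0 :=
  Ordinal.limitRecOn_zero _ _ _

theorem countPlus_add_one (β : Ordinal) :
    countPlus.{0, 0} s (β + 1) = if s β = 1 then countPlus s β + 1 else countPlus s β :=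
  Ordinal.limitRecOn_add_one _ _ _ _

theorem countPlus_of_isSuccLimit {γ : Ordinal} (h : Order.IsSuccLimit γ) :
    countPlus.{0, 0} s γ = ⨆ β : Set.Iio γ, countPlus s β.1 :=
  Ordinal.limitRecOn_limit _ _ _ _ h

theorem countPlus_congr {s₁ s₂ : Ordinal.{0} → ℤ} {γ : Ordinal} (h : ∀ β < γ, s₁ β = s₂ β) :
    countPlus.{0, 0} s₁ γ = countPlus s₂ γ := by
  induction γ using Ordinal.limitRecOn with
  | zero => simp
  | add_one γ ih =>
    rw [countPlus_add_one, countPlus_add_one, h γ (lt_add_one γ),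
      ih fun β hβ => h β (hβ.trans (lt_add_one γ))]
  | limit γ hγ ih =>
    simp only [countPlus_of_isSuccLimit _ hγ]
    congr! 2 with β
    exact ih β.1 β.2 fun δ hδ => h δ (hδ.trans β.2)

theorem countPlus_mono : Monotone (countPlus.{0, 0} s) := by
  intro β γ h
  induction γ using Ordinal.limitRecOn generalizing β with
  | zero => rw [nonpos_iff_eq_zero.1 h]
  | add_one γ ih =>
    rcases h.lt_or_eq with h | rfl
    · refine (ih (Order.lt_add_one_iff.1 h)).trans ?_
      rw [countPlus_add_one]
      split_ifs
      exacts [le_self_add, le_rfl]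
    · exact le_rfl
  | limit γ hγ ih =>
    rcases h.lt_or_eq with h | rfl
    · rw [countPlus_of_isSuccLimit _ hγ]
      exact le_ciSup Ordinal.bddAbove_of_small (⟨β, h⟩ : Set.Iio γ)
    · exact le_rfl

theorem countPlus_add (a γ : Ordinal) :
    countPlus.{0, 0} s (a + γ) = countPlus s a + countPlus (fun i => s (a + i)) γ := by
  induction γ using Ordinal.limitRecOn with
  | zero => simp
  | add_one γ ih =>
    rw [← add_assoc, countPlus_add_one, countPlus_add_one, ih]
    split_ifs
    exacts [add_assoc _ _ _, rfl]
  | limit γ hγ ih =>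
    have : Nonempty (Set.Iio γ) := ⟨⟨0, hγ.bot_lt⟩⟩
    rw [countPlus_of_isSuccLimit _ (Ordinal.isSuccLimit_add a hγ),
      countPlus_of_isSuccLimit _ hγ,
      (Ordinal.isNormal_add_right _).map_iSup Ordinal.bddAbove_of_small]
    refine le_antisymm (Ordinal.iSup_le fun ⟨β, hβ⟩ => ?_)
      (Ordinal.iSup_le fun ⟨β, hβ⟩ => ?_)
    · rcases le_or_gt a β with haβ | hβa
      · have hβa : β - a < γ := (Ordinal.sub_lt_of_le haβ).2 hβ
        refine le_of_eq_of_le ?_ (le_ciSup Ordinal.bddAbove_of_small (⟨β - a, hβa⟩ : Set.Iio γ))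
        rw [← ih _ hβa, Ordinal.add_sub_cancel_of_le haβ]
      · refine (countPlus_mono s hβa.le).trans ?_
        refine le_of_eq_of_le ?_ (le_ciSup Ordinal.bddAbove_of_small (⟨0, hγ.bot_lt⟩ : Set.Iio γ))
        rw [← ih 0 hγ.bot_lt, add_zero]
    · rw [← ih β hβ]
      exact le_ciSup Ordinal.bddAbove_of_small
        (⟨a + β, add_lt_add_right hβ a⟩ : Set.Iio (a + γ))

theorem countPlus_eq_self {γ : Ordinal} (h : ∀ β < γ, s β = 1) : countPlus.{0, 0} s γ = γ := by
  induction γ using Ordinal.limitRecOn with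
  | zero => simp
  | add_one γ ih =>
    rw [countPlus_add_one, if_pos (h γ (lt_add_one γ)),
      ih fun β hβ => h β (hβ.trans (lt_add_one γ))]
  | limit γ hγ ih =>
    rw [countPlus_of_isSuccLimit _ hγ]
    refine le_antisymm (Ordinal.iSup_le fun ⟨β, hβ⟩ => ?_) (le_of_forall_lt fun β hβ => ?_)
    · rw [ih β hβ fun δ hδ => h δ (hδ.trans hβ)]
      exact hβ.le
    · have hβ1 : β + 1 < γ := hγ.add_one_lt hβ
      calc β < β + 1 := lt_add_one β
        _ = countPlus s (β + 1) := (ih _ hβ1 fun δ hδ => h δ (hδ.trans hβ1)).symm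
        _ ≤ _ := le_ciSup Ordinal.bddAbove_of_small (⟨β + 1, hβ1⟩ : Set.Iio γ)

end countPlus

theorem trunc_sign_of_lt {z : SSurreal} {β α : Ordinal} (h : α < (trunc z β).length) :
    (trunc z β).sign α = z.sign α := if_pos h

theorem trunc_concat_of_le {u : SSurreal} (v : SSurreal) {β : Ordinal} (h : β ≤ u.length) :
    trunc (concat u v) β = trunc u β := by
  have hlen : (trunc (concat u v) β).length = β := min_eq_left (h.trans le_self_add)
  refine ext_sign (hlen.trans (min_eq_left h).symm) fun α hα => ?_
  have hαβ : α < β := hlen ▸ hα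
  rw [trunc_sign_of_lt hα, trunc_sign_of_lt (lt_min hαβ (hαβ.trans_le h)),
    concat_sign_of_lt _ (hαβ.trans_le h)]

theorem trunc_concat_add (u v : SSurreal) (β : Ordinal) :
    trunc (concat u v) (u.length + β) = concat u (trunc v β) := by
  refine ext_sign (min_add_add_left _ _ _) fun α hα => ?_
  rw [trunc_sign_of_lt hα]
  rcases lt_or_ge α u.length with h | h
  · rw [concat_sign_of_lt _ h, concat_sign_of_lt _ h]
  · have hα' : α - u.length < (trunc v β).length := by
      rw [Ordinal.sub_lt_of_le h]
      exact hα.trans_eq (min_add_add_left _ _ _)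
    rw [concat_sign_of_le _ h, concat_sign_of_le _ h, trunc_sign_of_lt hα']

theorem trunc_ofOrdinal (o γ : Ordinal) : trunc (ofOrdinal o) γ = ofOrdinal (min γ o) :=
  ext_sign rfl fun α hα => by
    rw [trunc_sign_of_lt hα, ofOrdinal_sign_of_lt (o := o) (hα.trans_le (min_le_right _ _)),
      ofOrdinal_sign_of_lt (o := min γ o) hα]

theorem tau_concat (u v : SSurreal) : tau.{0} (concat u v) = tau u + tau v := by
  unfold tau
  rw [concat_length, countPlus_add]
  congr 1
  · exact countPlus_congr fun β hβ => concat_sign_of_lt v hβ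
  · exact countPlus_congr fun β _ => concat_sign_add u v β

theorem tau_ofOrdinal (o : Ordinal) : tau.{0} (ofOrdinal o) = o :=
  countPlus_eq_self _ fun _ h => ofOrdinal_sign_of_lt h

noncomputable def oSum (α : Ordinal.{0}) (g : Ordinal.{0} → Ordinal.{0}) : Ordinal.{0} :=
  Ordinal.limitRecOn α 0 (fun β ih => ih + g β) (fun γ _ ih => ⨆ β : Set.Iio γ, ih β.1 β.2)

section oSum

variable (g : Ordinal.{0} → Ordinal.{0})

@[simp] theorem oSum_zero : oSum 0 g = 0 :=
  Ordinal.limitRecOn_zero _ _ _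

theorem oSum_add_one (α : Ordinal) : oSum (α + 1) g = oSum α g + g α :=
  Ordinal.limitRecOn_add_one _ _ _ _

theorem oSum_of_isSuccLimit {α : Ordinal} (hα : Order.IsSuccLimit α) :
    oSum α g = ⨆ β : Set.Iio α, oSum β.1 g :=
  Ordinal.limitRecOn_limit _ _ _ _ hα

theorem concatSum_ofOrdinal (α : Ordinal) :
    concatSum α (fun β => ofOrdinal (g β)) = ofOrdinal (oSum α g) := by
  induction α using Ordinal.limitRecOn with
  | zero => rw [concatSum_zero, oSum_zero]; exact ext_sign rfl fun β hβ => absurd hβ (by simp)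
  | add_one α ih => rw [concatSum_add_one, ih, oSum_add_one, concat_ofOrdinal]
  | limit α hα ih =>
    rw [concatSum_of_isSuccLimit hα, oSum_of_isSuccLimit _ hα]
    refine chainSup_eq ⟨?_, fun t ht β hβ => ?_⟩
    · rintro _ ⟨⟨p, hp⟩, rfl⟩
      dsimp only
      rw [ih p hp]
      exact sle_ofOrdinal (le_ciSup Ordinal.bddAbove_of_small (⟨p, hp⟩ : Set.Iio α))
    · obtain ⟨⟨p, hp⟩, hβp⟩ := Ordinal.lt_iSup_iff.1 hβ
      have hpt := ht _ ⟨⟨p, hp⟩, rfl⟩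
      dsimp only at hpt
      rw [ih p hp] at hpt
      rw [ofOrdinal_sign_of_lt (o := ⨆ β : Set.Iio α, oSum β.1 g) hβ, ← hpt β hβp,
        ofOrdinal_sign_of_lt hβp]

end oSum

theorem oSum_opow_le (c β : Ordinal) :
    oSum β (fun i => ω ^ (c + (i + 1) + 1)) ≤ ω ^ (c + β + 2) := by
  induction β using Ordinal.limitRecOn with
  | zero => simp
  | add_one β ih =>
    have hexp : c + (β + 1) + 1 = c + β + 2 := by
      rw [← add_assoc, add_assoc _ 1 1, one_add_one_eq_two]
    rw [oSum_add_one, hexp]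
    calc oSum β _ + ω ^ (c + β + 2) ≤ ω ^ (c + β + 2) + ω ^ (c + β + 2) := by gcongr
      _ = ω ^ (c + β + 2) * 2 := (Ordinal.mul_two _).symm
      _ ≤ ω ^ (c + β + 2) * ω := by gcongr; exact (Ordinal.natCast_lt_omega0 2).le
      _ = ω ^ (c + (β + 1) + 2) := by
        rw [← Ordinal.opow_succ, Order.succ_eq_add_one, ← add_assoc c β 1, add_assoc _ 1 2,
          add_assoc _ 2 1]
        norm_num
  | limit β hβ ih =>
    rw [oSum_of_isSuccLimit _ hβ]
    exact Ordinal.iSup_le fun ⟨i, hi⟩ =>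
      (ih i hi).trans (Ordinal.opow_le_opow_right omega0_pos (by gcongr; exact hi.le))

theorem oSum_opow_of_isSuccLimit (c : Ordinal) {α : Ordinal} (hα : Order.IsSuccLimit α) :
    oSum α (fun i => ω ^ (c + (i + 1) + 1)) = ω ^ (c + α) := by
  rw [oSum_of_isSuccLimit _ hα]
  apply le_antisymm
  · refine Ordinal.iSup_le fun ⟨β, hβ⟩ =>
      (oSum_opow_le c β).trans (Ordinal.opow_le_opow_right omega0_pos ?_)
    have hβ2 : β + 2 < α := by
      simpa [add_assoc, one_add_one_eq_two] using hα.add_one_lt (hα.add_one_lt hβ)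
    rw [add_assoc]
    gcongr
  · refine le_of_eq_of_le (((Ordinal.isNormal_opow one_lt_omega0).comp
      (Ordinal.isNormal_add_right c)).apply_of_isSuccLimit hα) (Ordinal.iSup_le fun ⟨β, hβ⟩ => ?_)
    have hβ1 : β + 1 < α := hα.add_one_lt hβ
    calc ω ^ (c + β) ≤ ω ^ (c + (β + 1) + 1) :=
          Ordinal.opow_le_opow_right omega0_pos
            ((add_le_add_right (le_self_add : β ≤ β + 1) c).trans le_self_add)
      _ ≤ oSum (β + 1) (fun i => ω ^ (c + (i + 1) + 1)) := by
          rw [oSum_add_one]; exact le_add_self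
      _ ≤ _ := le_ciSup Ordinal.bddAbove_of_small (⟨β + 1, hβ1⟩ : Set.Iio α)

theorem signScale_one (x : SSurreal) : signScale 1 x = x := if_pos rfl

/-- Gonshor's `β`-th block for `z` with all exponents shifted by `c`, which stands for the number
of `+1` signs of a prefix preceding `z`. -/
noncomputable def gonshorTerm (c : Ordinal.{0}) (z : SSurreal) (β : Ordinal.{0}) : SSurreal :=
  signScale (z.sign β) (ofOrdinal (ω ^ (c + tau (trunc z (β + 1)) + 1)))

theorem gonshorRHS_eq (z : SSurreal) :
    gonshorRHS z = concat one (concatSum z.length (gonshorTerm 0 z)) := by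
  rw [gonshorRHS]
  congr 2 with β
  rw [gonshorTerm, zero_add]

theorem concatSum_gonshorTerm_concat (c : Ordinal) (u v : SSurreal) :
    concatSum (concat u v).length (gonshorTerm c (concat u v)) =
      concat (concatSum u.length (gonshorTerm c u))
        (concatSum v.length (gonshorTerm (c + tau u) v)) := by
  rw [concat_length, concatSum_add]
  congr 1
  · refine concatSum_congr fun β hβ => ?_
    rw [gonshorTerm, gonshorTerm, concat_sign_of_lt v hβ,
      trunc_concat_of_le v (Order.add_one_le_of_lt hβ)]
  · refine concatSum_congr fun β _ => ?_
    rw [gonshorTerm, gonshorTerm, concat_sign_add, add_assoc u.length β 1, trunc_concat_add,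
      tau_concat, ← add_assoc c]

theorem concatSum_gonshorTerm_ofOrdinal (c : Ordinal) {α : Ordinal}
    (hα : Order.IsSuccLimit α) :
    concatSum α (gonshorTerm c (ofOrdinal α)) = ofOrdinal (ω ^ (c + α)) := by
  rw [← oSum_opow_of_isSuccLimit c hα, ← concatSum_ofOrdinal]
  refine concatSum_congr fun β hβ => ?_
  rw [gonshorTerm, ofOrdinal_sign_of_lt hβ, signScale_one, trunc_ofOrdinal,
    min_eq_left (Order.add_one_le_of_lt hβ), tau_ofOrdinal]

theorem concatSum_gonshorTerm_ofOrdinal_concat (c : Ordinal) {α : Ordinal}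
    (hα : Order.IsSuccLimit α) (v : SSurreal) :
    concatSum (concat (ofOrdinal α) v).length (gonshorTerm c (concat (ofOrdinal α) v)) =
      concat (ofOrdinal (ω ^ (c + α))) (concatSum v.length (gonshorTerm (c + α) v)) := by
  rw [concatSum_gonshorTerm_concat, tau_ofOrdinal, ofOrdinal_length,
    concatSum_gonshorTerm_ofOrdinal c hα]

theorem gonshorRHS_ofOrdinal_concat {α : Ordinal} (hα : Order.IsSuccLimit α) (v : SSurreal) :
    gonshorRHS (concat (ofOrdinal α) v) =
      concat (ofOrdinal (ω ^ α)) (concatSum v.length (gonshorTerm α v)) := by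
  have hω : ω ≤ ω ^ α := Ordinal.left_le_opow ω hα.bot_lt
  rw [gonshorRHS_eq, concatSum_gonshorTerm_ofOrdinal_concat 0 hα, zero_add,
    ← concat_assoc, one, concat_ofOrdinal, Ordinal.one_add_of_omega0_le hω]

end SSurreal

open SSurreal in
theorem omega_map_concat_formula_general (W : SSurreal → SSurreal)
    (hW : ∀ z, W z = gonshorRHS z) (x y : SSurreal)
    (hlim : ∃ α : Ordinal, Order.IsSuccLimit α ∧ sle (ofOrdinal α) y ∧
      ∀ β : Ordinal, sle (ofOrdinal β) y → β ≤ α) :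
    W (concat x y) = concat (W x) (W (concat (ofOrdinal (tau x)) y)) := by
  obtain ⟨α, hα, hαy, -⟩ := hlim
  obtain ⟨y', rfl⟩ : ∃ y', y = concat (ofOrdinal α) y' := ⟨_, (concat_drop hαy).symm⟩
  rw [hW, hW, hW, ← concat_assoc (ofOrdinal (tau x)), concat_ofOrdinal,
    gonshorRHS_ofOrdinal_concat (Ordinal.isSuccLimit_add _ hα), gonshorRHS_eq, gonshorRHS_eq,
    concatSum_gonshorTerm_concat, zero_add, concatSum_gonshorTerm_ofOrdinal_concat _ hα]
  simp only [concat_assoc]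

open SSurreal in
/-- if the maximal ordinal `α` with `α ⊑ y` is a limit ordinal
(and `y > 0`), then `ω^{x ∔ y} = ω^x ∔ ω^{τ_x ∔ y}`, where `W` is the ω-map
(given by Gonshor's sign sequence formula) and `τ_x` is the ordinal of `+1`
signs in `x`. -/
theorem omega_map_concat_formula (W : SSurreal → SSurreal)
    (hW : ∀ z, W z = gonshorRHS z) (x y : SSurreal) (hy : lt zero y)
    (hlim : ∃ α : Ordinal, Order.IsSuccLimit α ∧ sle (ofOrdinal α) y ∧
      ∀ β : Ordinal, sle (ofOrdinal β) y → β ≤ α) :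
    W (concat x y) = concat (W x) (W (concat (ofOrdinal (tau x)) y)) :=
  omega_map_concat_formula_general W hW x y hlim
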